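/- arXiv:1008.1080 — 6 statements merged into one kernel-verified Lean document; each statement's English description precedes it below -/
import Mathlib

section
/- Let W be a group, r an involution in W, W⁺ ⊴ W of index 2 with r ∉ W⁺, M a normal subgroup of W⁺, and K a normal subgroup of W contained in W⁺. Set N = M ∩ K. Then the group (rNr⁻¹)/(N ∩ rNr⁻¹) is isomorphic to the group ((rMr⁻¹ ∩ K)·M)/M, which is a normal subgroup of (rMr⁻¹·M)/M. -/
/-!
Since `K` is normal, `r (M ⊓ K) r⁻¹ = rMr⁻¹ ⊓ K =: A`, and `N ⊓ A = M ⊓ A`; the isomorphism is then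
the second isomorphism theorem `A / (M ⊓ A) ≃ AM / M`. For normality, `AM` is normalised by
`rMr⁻¹` (which normalises both `A` and `M`) and by `M ≤ AM`, hence by `rMr⁻¹ ⊔ M`.
-/

/-- The conjugate subgroup `r M r⁻¹`. -/
def conjSub {W : Type} [Group W] (r : W) (M : Subgroup W) : Subgroup W :=
  M.map (MulAut.conj r).toMonoidHom

theorem conjSub_inf_of_normal {W : Type} [Group W] (r : W) (M K : Subgroup W) [K.Normal] :
    conjSub r (M ⊓ K) = conjSub r M ⊓ K := by
  rw [conjSub, Subgroup.map_inf_eq _ _ _ (MulAut.conj r).injective]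
  exact congrArg _ (Subgroup.Normal.map_conj_eq K r)

namespace Subgroup

variable {G : Type*} [Group G]

theorem nonempty_quotient_inf_mulEquiv_sup_quotient {A N L : Subgroup G} (hAL : A ≤ L)
    [((N ⊓ L ⊓ A).subgroupOf A).Normal] [(N.subgroupOf (A ⊔ N)).Normal] :
    Nonempty (A ⧸ (N ⊓ L ⊓ A).subgroupOf A ≃* ↥(A ⊔ N) ⧸ N.subgroupOf (A ⊔ N)) := by
  have hAN : A ≤ normalizer N := le_sup_left.trans (le_normalizer_of_normal_subgroupOf le_sup_right)
  have := normal_subgroupOf_of_le_normalizer hAN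
  have hN : (N ⊓ L ⊓ A).subgroupOf A = N.subgroupOf A :=
    subgroupOf_inj.2 (by rw [inf_right_idem, inf_assoc, inf_of_le_right hAL])
  exact ⟨(QuotientGroup.quotientMulEquivOfEq hN).trans
    (QuotientGroup.quotientInfEquivProdNormalizerQuotient A N hAN)⟩

theorem inf_sup_subgroupOf_sup_normal {H K M : Subgroup G} [K.Normal]
    [(M.subgroupOf (H ⊔ M)).Normal] : ((H ⊓ K ⊔ M).subgroupOf (H ⊔ M)).Normal := by
  rw [normal_subgroupOf_iff_le_normalizer (sup_le_sup_right inf_le_left M)]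
  have hHK : H ≤ normalizer (H ⊓ K : Subgroup G) :=
    (le_inf le_normalizer le_normalizer_of_normal).trans inf_normalizer_le_normalizer_inf
  have hM : H ≤ normalizer M := le_sup_left.trans (le_normalizer_of_normal_subgroupOf le_sup_right)
  exact sup_le ((le_inf hHK hM).trans (normalizer_inf_normalizer_le_normalizer_sup _ _))
    (le_sup_right.trans le_normalizer)

end Subgroup

theorem stmt_7_general (W : Type) [Group W] (r : W)
    (M K : Subgroup W) [K.Normal]
    [((M ⊓ K ⊓ conjSub r (M ⊓ K)).subgroupOf (conjSub r (M ⊓ K))).Normal]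
    [(M.subgroupOf ((conjSub r M ⊓ K) ⊔ M)).Normal]
    [(M.subgroupOf (conjSub r M ⊔ M)).Normal] :
    Nonempty ((↥(conjSub r (M ⊓ K)) ⧸
          (M ⊓ K ⊓ conjSub r (M ⊓ K)).subgroupOf (conjSub r (M ⊓ K))) ≃*
        (↥((conjSub r M ⊓ K) ⊔ M) ⧸ M.subgroupOf ((conjSub r M ⊓ K) ⊔ M))) ∧
    (Subgroup.map (QuotientGroup.mk' (M.subgroupOf (conjSub r M ⊔ M)))
        (((conjSub r M ⊓ K) ⊔ M).subgroupOf (conjSub r M ⊔ M))).Normal := by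
  refine ⟨?_, Subgroup.inf_sup_subgroupOf_sup_normal.map _ (QuotientGroup.mk'_surjective _)⟩
  -- the quotient's normality instance mentions `conjSub r (M ⊓ K)` too, so rewrite it everywhere
  generalize hB : conjSub r (M ⊓ K) = B at *
  rw [conjSub_inf_of_normal] at hB
  subst hB
  exact Subgroup.nonempty_quotient_inf_mulEquiv_sup_quotient inf_le_right

/-- With `N = M ∩ K`, the chirality group of the mix, `(rNr⁻¹)/(N ∩ rNr⁻¹)`, is
isomorphic to `((rMr⁻¹ ∩ K)·M)/M`, which is a normal subgroup of `(rMr⁻¹·M)/M`. -/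
theorem stmt_7 (W : Type) [Group W] (r : W) (hr : r ^ 2 = 1)
    (Wp : Subgroup W) [Wp.Normal] (hWp : Wp.index = 2) (hrW : r ∉ Wp)
    (M K : Subgroup W) (hMle : M ≤ Wp) [(M.subgroupOf Wp).Normal]
    [K.Normal] (hKle : K ≤ Wp)
    [((M ⊓ K ⊓ conjSub r (M ⊓ K)).subgroupOf (conjSub r (M ⊓ K))).Normal]
    [(M.subgroupOf ((conjSub r M ⊓ K) ⊔ M)).Normal]
    [(M.subgroupOf (conjSub r M ⊔ M)).Normal] :
    Nonempty ((↥(conjSub r (M ⊓ K)) ⧸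
          (M ⊓ K ⊓ conjSub r (M ⊓ K)).subgroupOf (conjSub r (M ⊓ K))) ≃*
        (↥((conjSub r M ⊓ K) ⊔ M) ⧸ M.subgroupOf ((conjSub r M ⊓ K) ⊔ M))) ∧
    (Subgroup.map (QuotientGroup.mk' (M.subgroupOf (conjSub r M ⊔ M)))
        (((conjSub r M ⊓ K) ⊔ M).subgroupOf (conjSub r M ⊔ M))).Normal :=
  stmt_7_general W r M K
end

section
/- Let W be a group, r an involution in W, W⁺ ⊴ W of index 2 with r ∉ W⁺, M ⊴ W⁺, K ⊴ W with K ≤ W⁺, and N = M ∩ K. Then N = rNr⁻¹ (equivalently, N is normal in W) if and only if M ∩ K ≤ rMr⁻¹. -/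
/-! Since `K` is normal, `r (M ⊓ K) r⁻¹ = rMr⁻¹ ⊓ K`, so `M ⊓ K ≤ r (M ⊓ K) r⁻¹` is equivalent to
`M ⊓ K ≤ rMr⁻¹`; and for an involution `r`, a subgroup contained in its `r`-conjugate equals it,
because conjugating the inclusion by `r` gives the reverse one. -/

section conjSub

variable {W : Type} [Group W]

theorem conjSub_mono (r : W) {M M' : Subgroup W} (h : M ≤ M') : conjSub r M ≤ conjSub r M' :=
  Subgroup.map_mono h

theorem conjSub_inf (r : W) (M K : Subgroup W) :
    conjSub r (M ⊓ K) = conjSub r M ⊓ conjSub r K :=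
  Subgroup.map_inf M K _ (MulEquiv.injective _)

theorem conjSub_of_normal (r : W) (K : Subgroup W) [K.Normal] : conjSub r K = K :=
  Subgroup.Normal.conj_smul_eq_self r K

theorem conjSub_conjSub_of_sq_eq_one {r : W} (hr : r ^ 2 = 1) (M : Subgroup W) :
    conjSub r (conjSub r M) = M := by
  have hrr : r * r = 1 := by rw [← sq, hr]
  have hrr' (y : W) : r * (r * y) = y := by rw [← mul_assoc, hrr, one_mul]
  have hinv : r⁻¹ = r := inv_eq_of_mul_eq_one_right hrr
  ext x
  simp [conjSub, Subgroup.mem_map, hinv, mul_assoc, hrr, hrr']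

theorem conjSub_eq_self_iff_le_of_sq_eq_one {r : W} (hr : r ^ 2 = 1) (N : Subgroup W) :
    conjSub r N = N ↔ N ≤ conjSub r N :=
  ⟨fun h => h.ge, fun h =>
    le_antisymm ((conjSub_mono r h).trans_eq (conjSub_conjSub_of_sq_eq_one hr N)) h⟩

end conjSub

theorem stmt_8_general (W : Type) [Group W] (r : W) (hr : r ^ 2 = 1)
    (M K : Subgroup W) [K.Normal] :
    conjSub r (M ⊓ K) = M ⊓ K ↔ M ⊓ K ≤ conjSub r M := by
  rw [conjSub_eq_self_iff_le_of_sq_eq_one hr, conjSub_inf, conjSub_of_normal r K, le_inf_iff]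
  exact and_iff_left inf_le_right

/-- With `N = M ∩ K`, `N = rNr⁻¹` if and only if `M ∩ K ≤ rMr⁻¹`. -/
theorem stmt_8 (W : Type) [Group W] (r : W) (hr : r ^ 2 = 1)
    (Wp : Subgroup W) [Wp.Normal] (hWp : Wp.index = 2) (hrW : r ∉ Wp)
    (M K : Subgroup W) (hMle : M ≤ Wp) [(M.subgroupOf Wp).Normal]
    [K.Normal] (hKle : K ≤ Wp) :
    conjSub r (M ⊓ K) = M ⊓ K ↔ M ⊓ K ≤ conjSub r M :=
  stmt_8_general W r hr M K
end

section
/- Let Γ = ⟨σ₁,…,σ_{n-1}⟩ and Λ = ⟨λ₁,…,λ_{n-1}⟩ be groups with n-1 distinguished generators each, where Λ satisfies the intersection property ⟨λ_i : i ∈ I⟩ ∩ ⟨λ_i : i ∈ J⟩ = ⟨λ_i : i ∈ I ∩ J⟩ for all subsets I, J of {1,…,n-1} of the form {i,…,j}. Suppose π : Γ → Λ is a homomorphism with π(σ_j) = λ_j for all j, and π is injective on the subgroup ⟨σ₁,…,σ_{n-2}⟩, which itself satisfies the intersection property. Then for each j with 2 ≤ j ≤ n-1, ⟨σ₁,…,σ_{n-2}⟩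 ∩ ⟨σ_j,…,σ_{n-1}⟩ = ⟨σ_j,…,σ_{n-2}⟩. -/
/-!
A homomorphism `f` that is injective on `A` detects intersections with `A`: if `f A ⊓ f B` lies
in `f C` for some `C ≤ A ⊓ B`, then for `φ ∈ A ⊓ B` a preimage in `C` of `f φ` must equal `φ`.
Here `f = π`, `A = ⟨σ₁,…,σ_{n-2}⟩`, `B = ⟨σ_j,…,σ_{n-1}⟩`, `C = ⟨σ_j,…,σ_{n-2}⟩`, and the
required inclusion of images is the intersection property of `Λ`.
-/
/-- The subgroup generated by the generators `σ_a, …, σ_b`. -/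
def gensIn {G : Type} [Group G] (σ : ℕ → G) (a b : ℕ) : Subgroup G :=
  Subgroup.closure (σ '' {i | a ≤ i ∧ i ≤ b})

namespace Subgroup

theorem inf_eq_of_injOn_of_map_inf_le {G H : Type*} [Group G] [Group H] (f : G →* H)
    {A B C : Subgroup G} (hinj : Set.InjOn f A) (hC : C ≤ A ⊓ B)
    (hmap : A.map f ⊓ B.map f ≤ C.map f) : A ⊓ B = C := by
  refine le_antisymm (fun φ hφ => ?_) hC
  obtain ⟨ψ, hψC, hψφ⟩ := hmap ⟨⟨φ, hφ.1, rfl⟩, ⟨φ, hφ.2, rfl⟩⟩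
  rwa [← hinj (hC hψC).1 hφ.1 hψφ]

end Subgroup

section gensIn

variable {G H : Type} [Group G] [Group H]

theorem gensIn_mono (σ : ℕ → G) {a a' b b' : ℕ} (ha : a' ≤ a) (hb : b ≤ b') :
    gensIn σ a b ≤ gensIn σ a' b' :=
  Subgroup.closure_mono <| Set.image_mono fun _ hi => ⟨ha.trans hi.1, hi.2.trans hb⟩

theorem map_gensIn (f : G →* H) {σ : ℕ → G} {τ : ℕ → H} {a b : ℕ}
    (h : ∀ i, a ≤ i → i ≤ b → f (σ i) = τ i) : (gensIn σ a b).map f = gensIn τ a b := by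
  rw [gensIn, gensIn, MonoidHom.map_closure, Set.image_image]
  exact congrArg _ <| Set.image_congr fun i hi => h i hi.1 hi.2

end gensIn

theorem stmt_12_general (n : ℕ) (Γ Λ : Type) [Group Γ] [Group Λ]
    (σ : ℕ → Γ) (lam : ℕ → Λ)
    (hΛint : ∀ i j k l, 1 ≤ i → j ≤ n - 1 → 1 ≤ k → l ≤ n - 1 →
      gensIn lam i j ⊓ gensIn lam k l = gensIn lam (max i k) (min j l))
    (π : Γ →* Λ) (hπ : ∀ j, 1 ≤ j → j ≤ n - 1 → π (σ j) = lam j)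
    (hinj : Set.InjOn π (gensIn σ 1 (n - 2) : Set Γ)) :
    ∀ j, 2 ≤ j → j ≤ n - 1 →
      gensIn σ 1 (n - 2) ⊓ gensIn σ j (n - 1) = gensIn σ j (n - 2) := by
  intro j hj2 hjn
  have hj1 : 1 ≤ j := by omega
  have hn : n - 2 ≤ n - 1 := by omega
  have hmap : ∀ a b, 1 ≤ a → b ≤ n - 1 → (gensIn σ a b).map π = gensIn lam a b :=
    fun a b ha hb => map_gensIn π fun i hai hib => hπ i (ha.trans hai) (hib.trans hb)
  refine Subgroup.inf_eq_of_injOn_of_map_inf_le π hinj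
    (le_inf (gensIn_mono σ hj1 le_rfl) (gensIn_mono σ le_rfl hn)) ?_
  rw [hmap 1 (n - 2) le_rfl hn, hmap j (n - 1) hj1 le_rfl, hmap j (n - 2) hj1 hn,
    hΛint 1 (n - 2) j (n - 1) le_rfl hn hj1 le_rfl, max_eq_right hj1, min_eq_left hn]

/-- Quotient criterion: if `π : Γ → Λ` sends `σ_j` to `λ_j`, `Λ` has the intersection
property, and `π` is injective on `⟨σ₁,…,σ_{n-2}⟩` which itself has the intersection
property, then `⟨σ₁,…,σ_{n-2}⟩ ∩ ⟨σ_j,…,σ_{n-1}⟩ = ⟨σ_j,…,σ_{n-2}⟩` for `2 ≤ j ≤ n-1`. -/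
theorem stmt_12 (n : ℕ) (Γ Λ : Type) [Group Γ] [Group Λ]
    (σ : ℕ → Γ) (lam : ℕ → Λ)
    (hσgen : gensIn σ 1 (n - 1) = ⊤) (hlamgen : gensIn lam 1 (n - 1) = ⊤)
    (hΛint : ∀ i j k l, 1 ≤ i → j ≤ n - 1 → 1 ≤ k → l ≤ n - 1 →
      gensIn lam i j ⊓ gensIn lam k l = gensIn lam (max i k) (min j l))
    (π : Γ →* Λ) (hπ : ∀ j, 1 ≤ j → j ≤ n - 1 → π (σ j) = lam j)
    (hinj : Set.InjOn π (gensIn σ 1 (n - 2) : Set Γ))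
    (hΓint : ∀ i j k l, 1 ≤ i → j ≤ n - 2 → 1 ≤ k → l ≤ n - 2 →
      gensIn σ i j ⊓ gensIn σ k l = gensIn σ (max i k) (min j l)) :
    ∀ j, 2 ≤ j → j ≤ n - 1 →
      gensIn σ 1 (n - 2) ⊓ gensIn σ j (n - 1) = gensIn σ j (n - 2) :=
  stmt_12_general n Γ Λ σ lam hΛint π hπ hinj
end

section
/- Let n ≥ 4 and let Γ = ⟨σ₁,…,σ_{n-1}⟩ be a group such that the subgroup Γ_{n-1} = ⟨σ₁,…,σ_{n-2}⟩ satisfies the intersection property for consecutive ranges (⟨σ_i,…,σ_j⟩ ∩ ⟨σ_k,…,σ_l⟩ = ⟨σ_max(i,k),…,σ_min(j,l)⟩ for all valid ranges within {1,…,n-2}), and suppose Γ_{n-1} ∩ ⟨σ_j,…,σ_{n-1}⟩ = ⟨σ_j,…,σ_{n-2}⟩ for j = 2,…,n-1. Then for all 1 ≤ i ≤ j ≤ n-1 and 1 ≤ k ≤ l ≤ n-1, ⟨σ_i,…,σ_j⟩ ∩ ⟨σ_k,…,σ_l⟩ = ⟨σ_m : max(i,k) ≤ m ≤ min(j,l)⟩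 (interpreted as the trivial group when the range is empty). -/
/- The only new intersections are those of a range ending at `n-1` with one inside
`Γ_{n-1} = ⟨σ₁,…,σ_{n-2}⟩`. Such a range `⟨σ_k,…,σ_l⟩` lies in `Γ_{n-1}`, so intersecting
`⟨σ_i,…,σ_{n-1}⟩` with it factors through `Γ_{n-1} ∩ ⟨σ_i,…,σ_{n-1}⟩ = ⟨σ_i,…,σ_{n-2}⟩`, and the
intersection property of `Γ_{n-1}` finishes. Two ranges both ending at `n-1` are nested. -/

section gensIn

variable {G : Type} [Group G] (σ : ℕ → G)

lemma gensIn_mono_s15 {a b c d : ℕ} (hca : c ≤ a) (hbd : b ≤ d) : gensIn σ a b ≤ gensIn σ c d :=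
  Subgroup.closure_mono (Set.image_mono fun _ hi => ⟨hca.trans hi.1, hi.2.trans hbd⟩)

lemma gensIn_le_inf (a b c d : ℕ) :
    gensIn σ (max a c) (min b d) ≤ gensIn σ a b ⊓ gensIn σ c d :=
  le_inf (gensIn_mono_s15 σ (le_max_left a c) (min_le_left b d))
    (gensIn_mono_s15 σ (le_max_right a c) (min_le_right b d))

lemma gensIn_inf_gensIn_same_right (a c b : ℕ) :
    gensIn σ a b ⊓ gensIn σ c b = gensIn σ (max a c) b := by
  rcases le_total a c with h | h
  · rw [max_eq_right h, inf_eq_right.mpr (gensIn_mono_s15 σ h le_rfl)]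
  · rw [max_eq_left h, inf_eq_left.mpr (gensIn_mono_s15 σ h le_rfl)]

lemma gensIn_upTo_last_inf_le {n : ℕ}
    (hsub : ∀ i j k l, 1 ≤ i → j ≤ n - 2 → 1 ≤ k → l ≤ n - 2 →
      gensIn σ i j ⊓ gensIn σ k l = gensIn σ (max i k) (min j l))
    (hcond : ∀ j, 2 ≤ j → j ≤ n - 1 →
      gensIn σ 1 (n - 2) ⊓ gensIn σ j (n - 1) = gensIn σ j (n - 2))
    {i k l : ℕ} (hi : 1 ≤ i) (hin : i ≤ n - 1) (hk : 1 ≤ k) (hl : l ≤ n - 2) :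
    gensIn σ i (n - 1) ⊓ gensIn σ k l ≤ gensIn σ (max i k) l := by
  have hkl : gensIn σ k l ≤ gensIn σ 1 (n - 2) := gensIn_mono_s15 σ hk hl
  obtain rfl | hi2 := hi.eq_or_lt
  · rw [max_eq_right hk]
    exact inf_le_right
  calc gensIn σ i (n - 1) ⊓ gensIn σ k l
      ≤ gensIn σ 1 (n - 2) ⊓ gensIn σ i (n - 1) ⊓ gensIn σ k l :=
        le_inf (le_inf (inf_le_right.trans hkl) inf_le_left) inf_le_right
    _ = gensIn σ (max i k) (min (n - 2) l) := by
        rw [hcond i hi2 hin, hsub i (n - 2) k l hi le_rfl hk hl]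
    _ = gensIn σ (max i k) l := by rw [min_eq_right hl]

end gensIn

theorem stmt_15_general (n : ℕ) (Γ : Type) [Group Γ] (σ : ℕ → Γ)
    (hsub : ∀ i j k l, 1 ≤ i → j ≤ n - 2 → 1 ≤ k → l ≤ n - 2 →
      gensIn σ i j ⊓ gensIn σ k l = gensIn σ (max i k) (min j l))
    (hcond : ∀ j, 2 ≤ j → j ≤ n - 1 →
      gensIn σ 1 (n - 2) ⊓ gensIn σ j (n - 1) = gensIn σ j (n - 2)) :
    ∀ i j k l, 1 ≤ i → i ≤ j → j ≤ n - 1 → 1 ≤ k → k ≤ l → l ≤ n - 1 →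
      gensIn σ i j ⊓ gensIn σ k l = gensIn σ (max i k) (min j l) := by
  intro i j k l hi hij hjn hk hkl hln
  refine le_antisymm ?_ (gensIn_le_inf σ i j k l)
  obtain hj | rfl : j ≤ n - 2 ∨ j = n - 1 := by omega
  · obtain hl | rfl : l ≤ n - 2 ∨ l = n - 1 := by omega
    · exact (hsub i j k l hi hj hk hl).le
    · rw [inf_comm, max_comm, min_eq_left (by omega)]
      exact gensIn_upTo_last_inf_le σ hsub hcond hk (by omega) hi hj
  · obtain hl | rfl : l ≤ n - 2 ∨ l = n - 1 := by omega
    · rw [min_eq_right (by omega)]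
      exact gensIn_upTo_last_inf_le σ hsub hcond hi (by omega) hk hl
    · rw [min_self, gensIn_inf_gensIn_same_right]

/-- Lemma 3.1: if `⟨σ₁,…,σ_{n-2}⟩` satisfies the intersection property for consecutive
ranges and `⟨σ₁,…,σ_{n-2}⟩ ∩ ⟨σ_j,…,σ_{n-1}⟩ = ⟨σ_j,…,σ_{n-2}⟩` for `j = 2,…,n-1`,
then the full intersection property for consecutive ranges holds in `Γ`. -/
theorem stmt_15 (n : ℕ) (hn : 4 ≤ n) (Γ : Type) [Group Γ] (σ : ℕ → Γ)
    (hgen : gensIn σ 1 (n - 1) = ⊤)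
    (hrel : ∀ i j, 1 ≤ i → i < j → j ≤ n - 1 →
      (((List.range' i (j - i + 1)).map σ).prod) ^ 2 = 1)
    (hsub : ∀ i j k l, 1 ≤ i → j ≤ n - 2 → 1 ≤ k → l ≤ n - 2 →
      gensIn σ i j ⊓ gensIn σ k l = gensIn σ (max i k) (min j l))
    (hcond : ∀ j, 2 ≤ j → j ≤ n - 1 →
      gensIn σ 1 (n - 2) ⊓ gensIn σ j (n - 1) = gensIn σ j (n - 2)) :
    ∀ i j k l, 1 ≤ i → i ≤ j → j ≤ n - 1 → 1 ≤ k → k ≤ l → l ≤ n - 1 →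
      gensIn σ i j ⊓ gensIn σ k l = gensIn σ (max i k) (min j l) :=
  stmt_15_general n Γ σ hsub hcond
end

section
/- Let Γ be a group generated by σ₁,…,σ_{n-1}, presented as a quotient W⁺/M of the free-like group W⁺ (the rotation subgroup of the universal string Coxeter group on n generators r₀,…,r_{n-1}), where M is the normal closure in W⁺ of a set of relators R. Then rMr⁻¹ (for r = r₀) equals the normal closure in W⁺ of the set Rʳ obtained from R by substituting s₁ ↦ s₁⁻¹, s₂ ↦ s₁²s₂, and s_j ↦ s_j for j ≥ 3, where s_i = r_{i-1}r_i. Consequently, the chirality group X = M·rMr⁻¹/M equals the normal closure in Γ = W⁺/M of the image of Rʳ. -/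
/-!
Conjugation by `r₀` acts on the generators of `W⁺` exactly as the substitution `chiralSub`
acts on words, so it sends the evaluation of a relator `w` to the evaluation of its
substitute. Since `chiralSub` is an involution of the free group, conjugation by `r₀` maps
`W⁺` onto itself, and an automorphism preserving `W⁺` carries normal closures in `W⁺` to
normal closures in `W⁺`; this gives `r₀ M r₀⁻¹ = ⟨⟨Rʳ⟩⟩`. In `W⁺/M` the factor `M` of
`M · r₀ M r₀⁻¹` dies, and the image of a normal closure under a surjection is the normal
closure of the image.
-/

/-- The normal closure of a set `R` inside the subgroup `Wp`: the smallest subgroup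
of the ambient group containing `R` and normalized by `Wp`. -/
def normalClosureIn {W : Type} [Group W] (Wp : Subgroup W) (R : Set W) : Subgroup W :=
  sInf {H : Subgroup W | R ⊆ ↑H ∧ ∀ g ∈ Wp, ∀ x ∈ H, g * x * g⁻¹ ∈ H}

/-- The substitution on words in the generators `s₁, s₂, s₃, …` (here `0`-indexed as
`s 0, s 1, s 2, …`) given by `s₁ ↦ s₁⁻¹`, `s₂ ↦ s₁² s₂`, `s_j ↦ s_j` for `j ≥ 3`. -/
def chiralSub : FreeGroup ℕ →* FreeGroup ℕ :=
  FreeGroup.lift fun j =>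
    if j = 0 then (FreeGroup.of 0)⁻¹
    else if j = 1 then (FreeGroup.of 0) ^ 2 * FreeGroup.of 1
    else FreeGroup.of j

/-- The rotation subgroup `W⁺`, generated by the `s_i`. -/
def WpOf {W : Type} [Group W] (s : ℕ → W) : Subgroup W :=
  Subgroup.closure (Set.range s)

/-- `M`, the normal closure in `W⁺` of the evaluated relators `R`. -/
def MOf {W : Type} [Group W] (s : ℕ → W) (R : Set (FreeGroup ℕ)) : Subgroup W :=
  normalClosureIn (WpOf s) (FreeGroup.lift s '' R)

section NormalClosureIn

variable {W : Type} [Group W] {Wp : Subgroup W} {S : Set W}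

theorem subset_normalClosureIn : S ⊆ normalClosureIn Wp S := fun _ hx =>
  Subgroup.mem_sInf.2 fun _ hH => hH.1 hx

theorem conj_mem_normalClosureIn {g x : W} (hg : g ∈ Wp) (hx : x ∈ normalClosureIn Wp S) :
    g * x * g⁻¹ ∈ normalClosureIn Wp S :=
  Subgroup.mem_sInf.2 fun H hH => hH.2 g hg x (Subgroup.mem_sInf.1 hx H hH)

theorem normalClosureIn_le {H : Subgroup W} (hS : S ⊆ H)
    (hH : ∀ g ∈ Wp, ∀ x ∈ H, g * x * g⁻¹ ∈ H) : normalClosureIn Wp S ≤ H :=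
  sInf_le ⟨hS, hH⟩

theorem normalClosureIn_eq_map_normalClosure (hS : S ⊆ Wp) :
    normalClosureIn Wp S = (Subgroup.normalClosure (Wp.subtype ⁻¹' S)).map Wp.subtype := by
  refine le_antisymm ?_ ?_
  · refine normalClosureIn_le (fun x hx => ⟨⟨x, hS hx⟩, Subgroup.subset_normalClosure hx, rfl⟩) ?_
    rintro g hg _ ⟨y, hy, rfl⟩
    exact ⟨⟨g, hg⟩ * y * ⟨g, hg⟩⁻¹, Subgroup.normalClosure_normal.conj_mem y hy ⟨g, hg⟩, rfl⟩
  · rw [Subgroup.map_le_iff_le_comap]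
    have : ((normalClosureIn Wp S).comap Wp.subtype).Normal :=
      ⟨fun n hn g => conj_mem_normalClosureIn g.2 hn⟩
    exact Subgroup.normalClosure_le_normal fun x hx => subset_normalClosureIn hx

theorem normalClosureIn_le_self (hS : S ⊆ Wp) : normalClosureIn Wp S ≤ Wp := by
  rw [normalClosureIn_eq_map_normalClosure hS]
  exact Subgroup.map_subtype_le _

theorem normalClosureIn_subgroupOf (hS : S ⊆ Wp) :
    (normalClosureIn Wp S).subgroupOf Wp = Subgroup.normalClosure (Wp.subtype ⁻¹' S) := by
  rw [Subgroup.subgroupOf, normalClosureIn_eq_map_normalClosure hS,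
    Subgroup.comap_map_eq_self_of_injective Wp.subtype_injective]

variable {W' : Type} [Group W'] {Wp' : Subgroup W'}

theorem map_normalClosureIn_le (f : W →* W') (hf : Wp ≤ Wp'.comap f) (S : Set W) :
    (normalClosureIn Wp S).map f ≤ normalClosureIn Wp' (f '' S) := by
  rw [Subgroup.map_le_iff_le_comap]
  refine normalClosureIn_le (fun x hx => subset_normalClosureIn ⟨x, hx, rfl⟩) fun g hg x hx => ?_
  have := conj_mem_normalClosureIn (S := f '' S) (hf hg) hx
  simpa only [Subgroup.mem_comap, map_mul, map_inv] using this

theorem map_normalClosureIn (e : W ≃* W') (he : Wp.map e.toMonoidHom = Wp') (S : Set W) :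
    (normalClosureIn Wp S).map e.toMonoidHom = normalClosureIn Wp' (e '' S) := by
  refine le_antisymm (map_normalClosureIn_le _ (Subgroup.map_le_iff_le_comap.1 he.le) S) ?_
  have he' : Wp' ≤ Wp.comap e.symm.toMonoidHom := by
    rw [← he, Subgroup.map_equiv_eq_comap_symm']
  have := map_normalClosureIn_le _ he' (e '' S)
  simp only [MulEquiv.coe_toMonoidHom, Set.image_image, MulEquiv.symm_apply_apply,
    Set.image_id'] at this
  rwa [Subgroup.map_le_iff_le_comap, ← Subgroup.map_equiv_eq_comap_symm'] at this

end NormalClosureIn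

theorem QuotientGroup.map_mk'_sup_left {G : Type} [Group G] (N H : Subgroup G) [N.Normal] :
    (N ⊔ H).map (QuotientGroup.mk' N) = H.map (QuotientGroup.mk' N) := by
  rw [Subgroup.map_sup, (Subgroup.map_eq_bot_iff _).2 (QuotientGroup.ker_mk' N).ge, bot_sup_eq]

theorem chiralSub_comp_chiralSub : chiralSub.comp chiralSub = MonoidHom.id _ := by
  ext (_ | _ | j) <;> simp [chiralSub]

theorem chiralSub_surjective : Function.Surjective chiralSub := fun x =>
  ⟨chiralSub x, DFunLike.congr_fun chiralSub_comp_chiralSub x⟩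

section Rotation

variable {W : Type} [Group W] (s : ℕ → W)

theorem WpOf_eq_range_lift : WpOf s = (FreeGroup.lift s).range :=
  FreeGroup.range_lift_eq_closure.symm

theorem lift_image_subset_WpOf (R : Set (FreeGroup ℕ)) : FreeGroup.lift s '' R ⊆ WpOf s := by
  rw [WpOf_eq_range_lift]
  exact Set.image_subset_range _ _

theorem MOf_le_WpOf (R : Set (FreeGroup ℕ)) : MOf s R ≤ WpOf s :=
  normalClosureIn_le_self (lift_image_subset_WpOf s R)

theorem MOf_subgroupOf_WpOf (R : Set (FreeGroup ℕ)) :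
    (MOf s R).subgroupOf (WpOf s) =
      Subgroup.normalClosure ((WpOf s).subtype ⁻¹' (FreeGroup.lift s '' R)) :=
  normalClosureIn_subgroupOf (lift_image_subset_WpOf s R)

variable {s}

theorem lift_comp_chiralSub {f : W →* W} (h0 : f (s 0) = (s 0)⁻¹)
    (h1 : f (s 1) = s 0 ^ 2 * s 1) (h2 : ∀ j, 2 ≤ j → f (s j) = s j) :
    (FreeGroup.lift s).comp chiralSub = f.comp (FreeGroup.lift s) := by
  ext (_ | _ | j)
  · simp [chiralSub, h0]
  · simp [chiralSub, h1]
  · simp [chiralSub, h2 (j + 2) (by omega)]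

theorem map_WpOf_of_lift_comp_chiralSub {f : W →* W}
    (hf : (FreeGroup.lift s).comp chiralSub = f.comp (FreeGroup.lift s)) :
    (WpOf s).map f = WpOf s := by
  rw [WpOf_eq_range_lift, ← MonoidHom.range_comp, ← hf, MonoidHom.range_comp,
    chiralSub.range_eq_top_of_surjective chiralSub_surjective, ← MonoidHom.range_eq_map]

end Rotation

theorem stmt_17_general (W : Type) [Group W] (r₀ : W) (s : ℕ → W)
    (h0 : r₀ * s 0 * r₀⁻¹ = (s 0)⁻¹)
    (h1 : r₀ * s 1 * r₀⁻¹ = s 0 ^ 2 * s 1)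
    (h2 : ∀ j, 2 ≤ j → r₀ * s j * r₀⁻¹ = s j)
    (R : Set (FreeGroup ℕ))
    [((MOf s R).subgroupOf (WpOf s)).Normal] :
    Subgroup.map (MulAut.conj r₀).toMonoidHom (MOf s R) =
      normalClosureIn (WpOf s) (FreeGroup.lift s '' (chiralSub '' R)) ∧
    Subgroup.map (QuotientGroup.mk' ((MOf s R).subgroupOf (WpOf s)))
        (((MOf s R) ⊔ Subgroup.map (MulAut.conj r₀).toMonoidHom (MOf s R)).subgroupOf
          (WpOf s)) =
      Subgroup.normalClosure
        ((QuotientGroup.mk' ((MOf s R).subgroupOf (WpOf s))) ''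
          {x : ↥(WpOf s) | (x : W) ∈ FreeGroup.lift s '' (chiralSub '' R)}) := by
  set φ := MulAut.conj r₀
  have hφ : (FreeGroup.lift s).comp chiralSub = φ.toMonoidHom.comp (FreeGroup.lift s) :=
    lift_comp_chiralSub h0 h1 h2
  have hsubst : FreeGroup.lift s '' (chiralSub '' R) = φ '' (FreeGroup.lift s '' R) := by
    rw [Set.image_image, Set.image_image]
    exact Set.image_congr' (DFunLike.congr_fun hφ)
  have hconj : (MOf s R).map φ.toMonoidHom = MOf s (chiralSub '' R) := by
    rw [MOf, MOf, hsubst]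
    exact map_normalClosureIn φ (map_WpOf_of_lift_comp_chiralSub hφ) _
  refine ⟨hconj, ?_⟩
  rw [hconj, Subgroup.subgroupOf_sup (MOf_le_WpOf s R) (MOf_le_WpOf s _),
    QuotientGroup.map_mk'_sup_left, MOf_subgroupOf_WpOf s (chiralSub '' R),
    Subgroup.map_normalClosure _ _ (QuotientGroup.mk'_surjective _)]
  rfl

/-- `r₀ M r₀⁻¹` is the normal closure in `W⁺` of the substituted relators `Rʳ`, and
the chirality group `M·r₀Mr₀⁻¹/M` is the normal closure in `Γ = W⁺/M` of the image
of `Rʳ`. -/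
theorem stmt_17 (W : Type) [Group W] (r₀ : W) (hr : r₀ ^ 2 = 1) (s : ℕ → W)
    (h0 : r₀ * s 0 * r₀⁻¹ = (s 0)⁻¹)
    (h1 : r₀ * s 1 * r₀⁻¹ = s 0 ^ 2 * s 1)
    (h2 : ∀ j, 2 ≤ j → r₀ * s j * r₀⁻¹ = s j)
    (R : Set (FreeGroup ℕ))
    [((MOf s R).subgroupOf (WpOf s)).Normal] :
    Subgroup.map (MulAut.conj r₀).toMonoidHom (MOf s R) =
      normalClosureIn (WpOf s) (FreeGroup.lift s '' (chiralSub '' R)) ∧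
    Subgroup.map (QuotientGroup.mk' ((MOf s R).subgroupOf (WpOf s)))
        (((MOf s R) ⊔ Subgroup.map (MulAut.conj r₀).toMonoidHom (MOf s R)).subgroupOf
          (WpOf s)) =
      Subgroup.normalClosure
        ((QuotientGroup.mk' ((MOf s R).subgroupOf (WpOf s))) ''
          {x : ↥(WpOf s) | (x : W) ∈ FreeGroup.lift s '' (chiralSub '' R)}) :=
  stmt_17_general W r₀ s h0 h1 h2 R
end

section
/- Let W be a group, W⁺ ⊴ W of index 2, r an involution in W \ W⁺, and M, K ⊴ W⁺ with K also normal in W. If M·(rMr⁻¹) = W⁺ (P totally chiral), M ∩ K ≤ rMr⁻¹ (the mix is 'regular'), and the groups W⁺/M and W⁺/K have no nontrivial common quotient, then the group W⁺/(M ∩ K), which is isomorphic to (W⁺/M) × (W⁺/K), has a quotient isomorphic to (W⁺/M) × (W⁺/M). -/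
open scoped Pointwise in
theorem MonoidHom.prod_surjective_of_sup_ker_eq_top {G H₁ H₂ : Type*} [Group G] [Group H₁]
    [Group H₂] {f : G →* H₁} {g : G →* H₂}
    (hf : Function.Surjective f) (hg : Function.Surjective g) (h : f.ker ⊔ g.ker = ⊤) :
    Function.Surjective (f.prod g) := by
  rintro ⟨y₁, y₂⟩
  obtain ⟨a, rfl⟩ := hf y₁
  obtain ⟨b, rfl⟩ := hg y₂
  obtain ⟨m, hm, k, hk, hmk : m * k = a⁻¹ * b⟩ : a⁻¹ * b ∈ (f.ker : Set G) * (g.ker : Set G) := by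
    rw [← Subgroup.normal_mul, h]
    trivial
  have hb : b = a * m * k := by rw [mul_assoc, hmk, mul_inv_cancel_left]
  refine ⟨a * m, Prod.ext ?_ ?_⟩
  · simp [MonoidHom.mem_ker.mp hm]
  · simp [hb, MonoidHom.mem_ker.mp hk]

theorem Subgroup.sup_eq_top_of_forall_common_quotient_subsingleton {G : Type} [Group G]
    {A B : Subgroup G} [A.Normal] [B.Normal]
    (h : ∀ (Q : Type) [Group Q] (f : G ⧸ A →* Q) (g : G ⧸ B →* Q),
      Function.Surjective f → Function.Surjective g → Subsingleton Q) :
    A ⊔ B = ⊤ :=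
  QuotientGroup.subsingleton_iff.mp <| h _
    (QuotientGroup.map _ _ (MonoidHom.id G) le_sup_left)
    (QuotientGroup.map _ _ (MonoidHom.id G) le_sup_right)
    (QuotientGroup.map_surjective_of_surjective _ _ _ QuotientGroup.mk_surjective le_sup_left)
    (QuotientGroup.map_surjective_of_surjective _ _ _ QuotientGroup.mk_surjective le_sup_right)

theorem conjSub_subgroupOf {W : Type} [Group W] (r : W) (M H : Subgroup W) [H.Normal] :
    (conjSub r M).subgroupOf H = (M.subgroupOf H).comap (MulAut.conjNormal r⁻¹).toMonoidHom := by
  ext x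
  simp only [conjSub, Subgroup.mem_subgroupOf, Subgroup.mem_comap, Subgroup.mem_map_equiv]
  simp

theorem stmt_19_general (W : Type) [Group W] (r : W)
    (Wp : Subgroup W) [Wp.Normal]
    (M K : Subgroup W)
    [(M.subgroupOf Wp).Normal]
    [(K.subgroupOf Wp).Normal] [((M ⊓ K).subgroupOf Wp).Normal]
    (htc : M ⊔ conjSub r M = Wp)
    (hreg : M ⊓ K ≤ conjSub r M)
    (hq : ∀ (Q : Type) [Group Q] (f : (↥Wp ⧸ M.subgroupOf Wp) →* Q)
        (g : (↥Wp ⧸ K.subgroupOf Wp) →* Q),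
        Function.Surjective f → Function.Surjective g → Subsingleton Q) :
    Nonempty ((↥Wp ⧸ (M ⊓ K).subgroupOf Wp) ≃*
        ((↥Wp ⧸ M.subgroupOf Wp) × (↥Wp ⧸ K.subgroupOf Wp))) ∧
    ∃ f : (↥Wp ⧸ (M ⊓ K).subgroupOf Wp) →*
        ((↥Wp ⧸ M.subgroupOf Wp) × (↥Wp ⧸ M.subgroupOf Wp)),
      Function.Surjective f := by
  set M' := M.subgroupOf Wp
  set K' := K.subgroupOf Wp
  let σ := (MulAut.conjNormal (H := Wp) r⁻¹).toMonoidHom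
  let φ := (QuotientGroup.mk' M').prod (QuotientGroup.mk' K')
  let ψ := (QuotientGroup.mk' M').prod ((QuotientGroup.mk' M').comp σ)
  have hker_ψ : ψ.ker = M' ⊓ (conjSub r M).subgroupOf Wp := by
    rw [MonoidHom.ker_prod, ← MonoidHom.comap_ker, QuotientGroup.ker_mk', conjSub_subgroupOf]
  have hφ : Function.Surjective φ :=
    MonoidHom.prod_surjective_of_sup_ker_eq_top (QuotientGroup.mk'_surjective _)
      (QuotientGroup.mk'_surjective _) <| by
        simpa only [QuotientGroup.ker_mk'] using
          Subgroup.sup_eq_top_of_forall_common_quotient_subsingleton hq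
  have hψ : Function.Surjective ψ := by
    refine MonoidHom.prod_surjective_of_sup_ker_eq_top (QuotientGroup.mk'_surjective _)
      ((QuotientGroup.mk'_surjective _).comp (MulAut.conjNormal r⁻¹).surjective) ?_
    rw [QuotientGroup.ker_mk', ← MonoidHom.comap_ker, QuotientGroup.ker_mk', ← conjSub_subgroupOf,
      ← Subgroup.subgroupOf_sup (htc ▸ le_sup_left) (htc ▸ le_sup_right), htc,
      Subgroup.subgroupOf_self]
  refine ⟨⟨(QuotientGroup.quotientMulEquivOfEq ?_).trans
      (QuotientGroup.quotientKerEquivOfSurjective φ hφ)⟩,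
    QuotientGroup.lift _ ψ ?_, QuotientGroup.lift_surjective_of_surjective _ _ hψ _⟩
  · rw [MonoidHom.ker_prod, QuotientGroup.ker_mk', QuotientGroup.ker_mk']
    rfl
  · rw [hker_ψ]
    exact fun x hx => ⟨hx.1, hreg hx⟩

/-- If `M·(rMr⁻¹) = W⁺` (total chirality), `M ∩ K ≤ rMr⁻¹` (the mix is regular), and
`W⁺/M`, `W⁺/K` have no nontrivial common quotient, then
`W⁺/(M ∩ K) ≅ (W⁺/M) × (W⁺/K)` has a quotient isomorphic to `(W⁺/M) × (W⁺/M)`. -/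
theorem stmt_19 (W : Type) [Group W] (r : W) (hr : r ^ 2 = 1)
    (Wp : Subgroup W) [Wp.Normal] (hWp : Wp.index = 2) (hrW : r ∉ Wp)
    (M K : Subgroup W) (hMle : M ≤ Wp) (hKle : K ≤ Wp)
    [(M.subgroupOf Wp).Normal] [K.Normal]
    [(K.subgroupOf Wp).Normal] [((M ⊓ K).subgroupOf Wp).Normal]
    (htc : M ⊔ conjSub r M = Wp)
    (hreg : M ⊓ K ≤ conjSub r M)
    (hq : ∀ (Q : Type) [Group Q] (f : (↥Wp ⧸ M.subgroupOf Wp) →* Q)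
        (g : (↥Wp ⧸ K.subgroupOf Wp) →* Q),
        Function.Surjective f → Function.Surjective g → Subsingleton Q) :
    Nonempty ((↥Wp ⧸ (M ⊓ K).subgroupOf Wp) ≃*
        ((↥Wp ⧸ M.subgroupOf Wp) × (↥Wp ⧸ K.subgroupOf Wp))) ∧
    ∃ f : (↥Wp ⧸ (M ⊓ K).subgroupOf Wp) →*
        ((↥Wp ⧸ M.subgroupOf Wp) × (↥Wp ⧸ M.subgroupOf Wp)),
      Function.Surjective f :=
  stmt_19_general W r Wp M K htc hreg hq
end
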